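/- arXiv:1211.7117 — 2 statements merged into one kernel-verified Lean document; each statement's English description precedes it below -/
import Mathlib

section
/- The expected number of distinct (n−1)-patterns of a uniformly random permutation of length n (n ≥ 2) is exactly n − 2(n−1)/n. -/
/-!
Call position `k` a bond of `p` if `p k` and `p (k + 1)` are adjacent values. Deleting either end
of a bond gives the same pattern, and conversely if deleting position `i ≤ k` and deleting
position `k + 1` give the same pattern then `k` is a bond. Hence the distinct patterns in `D1 p` are counted by the
`n + 1` positions minus the bonds: `|D1 p| = n + 1 - C p`. Since the symmetric group is
2-transitive, the pair `(p k, p (k + 1))` is uniformly distributed over the `(n + 1) n` ordered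
pairs of distinct values, `2 n` of which are adjacent; so each of the `n` positions is a bond with
probability `2 / (n + 1)`.
-/

open Finset

/-- `del p i`: delete the `i`-th entry of `p` and relabel order-isomorphically. -/
def del {n : ℕ} (p : Equiv.Perm (Fin (n + 1))) (i : Fin (n + 1)) : Equiv.Perm (Fin n) :=
  (Tuple.sort fun j => p (i.succAbove j))⁻¹

/-- `D1 p`: the set of `(n-1)`-patterns of `p`. -/
def D1 {n : ℕ} (p : Equiv.Perm (Fin (n + 1))) : Finset (Equiv.Perm (Fin n)) :=
  Finset.univ.image (del p)

/-- `ins q j k`: insert the value `k - 1/2` just left of position `j` and relabel. -/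
def ins {n : ℕ} (q : Equiv.Perm (Fin n)) (j k : Fin (n + 1)) : Equiv.Perm (Fin (n + 1)) :=
  (finSuccEquiv' j).trans ((Equiv.optionCongr q).trans (finSuccEquiv' k).symm)

/-- `C p`: the number of bonds of `p` (adjacent positions with values differing by 1). -/
def C {n : ℕ} (p : Equiv.Perm (Fin (n + 1))) : ℕ :=
  (Finset.univ.filter fun i : Fin n =>
    Nat.dist (p i.castSucc).val (p i.succ).val = 1).card

/-- minimum gap of an injective word `f`, via the taxicab metric on (index, value). -/
noncomputable def mgF {n : ℕ} (f : Fin n → ℕ) : ℕ :=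
  sInf {m : ℕ | ∃ i j : Fin n, i < j ∧ Nat.dist i.val j.val + Nat.dist (f i) (f j) = m}

/-- minimum gap of a permutation. -/
noncomputable def mg {n : ℕ} (p : Equiv.Perm (Fin n)) : ℕ := mgF fun i => (p i).val

/-- the span of entries `p i` and `p j`: indices of entries strictly between them
horizontally or vertically. -/
def span {n : ℕ} (p : Equiv.Perm (Fin n)) (i j : Fin n) : Finset (Fin n) :=
  Finset.univ.filter fun m =>
    (i < m ∧ m < j) ∨ (min (p i) (p j) < p m ∧ p m < max (p i) (p j))

/-- the pattern of `p` after deleting the entries at positions in `S`, encoded as the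
list of (0-based) ranks of the remaining entries in positional order. -/
def patList {n : ℕ} (p : Equiv.Perm (Fin n)) (S : Finset (Fin n)) : List ℕ :=
  let l := (Sᶜ.sort (· ≤ ·)).map fun t => (p t).val
  l.map fun v => (l.filter fun w => w < v).length

/-- `Dk p k`: the set of distinct `(n-k)`-patterns of `p`. -/
def Dk {n : ℕ} (p : Equiv.Perm (Fin n)) (k : ℕ) : Finset (List ℕ) :=
  (Finset.univ.filter fun S : Finset (Fin n) => S.card = k).image (patList p)

open scoped Nat

namespace Fin

lemma val_add_ite_lt_succAbove {n : ℕ} (x : Fin (n + 1)) (q : Fin n) :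
    (q : ℕ) + (if x < x.succAbove q then 1 else 0) = x.succAbove q := by
  rcases lt_or_ge q.castSucc x with h | h
  · rw [succAbove_of_castSucc_lt _ _ h, if_neg (not_lt.2 h.le), val_castSucc, add_zero]
  · rw [succAbove_of_le_castSucc _ _ h, if_pos (h.trans_lt castSucc_lt_succ), val_succ]

lemma succAbove_castSucc_eq_succAbove_succ {n : ℕ} {k t : Fin n} (ht : t ≠ k) :
    k.castSucc.succAbove t = k.succ.succAbove t := by
  rcases ht.lt_or_gt with h | h
  · rw [succAbove_castSucc_of_lt _ _ h, succAbove_succ_of_le _ _ h.le]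
  · rw [succAbove_castSucc_of_le _ _ h.le, succAbove_succ_of_lt _ _ h]

end Fin

section Deletion

variable {n : ℕ} (p : Equiv.Perm (Fin (n + 1)))

lemma succAbove_del_apply (i : Fin (n + 1)) (t : Fin n) :
    (p i).succAbove (del p i t) = p (i.succAbove t) := by
  -- Sorting `w` lists `{p i}ᶜ` increasingly, and so does the order embedding `(p i).succAbove`.
  set w : Fin n → Fin (n + 1) := fun j => p (i.succAbove j)
  have hw : Function.Injective w := p.injective.comp Fin.succAbove_right_injective
  have hsorted : StrictMono (w ∘ Tuple.sort w) :=
    (Tuple.monotone_sort w).strictMono_of_injective (hw.comp (Tuple.sort w).injective)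
  have hrange : Set.range (w ∘ Tuple.sort w) = Set.range (p i).succAbove := by
    rw [EquivLike.range_comp, Fin.range_succAbove, show w = p ∘ i.succAbove from rfl,
      Set.range_comp, Fin.range_succAbove, Set.image_compl_eq p.bijective, Set.image_singleton]
  have h := congrFun (((Fin.strictMono_succAbove (p i)).range_inj hsorted).1 hrange.symm)
    ((Tuple.sort w)⁻¹ t)
  simpa [del, w] using h

lemma val_del_apply_add (i : Fin (n + 1)) (t : Fin n) :
    (del p i t : ℕ) + (if p i < p (i.succAbove t) then 1 else 0) = p (i.succAbove t) := by
  rw [← succAbove_del_apply]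
  exact Fin.val_add_ite_lt_succAbove _ _

lemma del_castSucc_eq_del_succ {k : Fin n}
    (h : Nat.dist (p k.castSucc) (p k.succ) = 1) : del p k.castSucc = del p k.succ := by
  ext t
  have e₁ := val_del_apply_add p k.castSucc t
  have e₂ := val_del_apply_add p k.succ t
  simp only [Nat.dist, Fin.lt_def] at h e₁ e₂
  by_cases ht : t = k
  · subst ht
    rw [Fin.succAbove_castSucc_self] at e₁
    rw [Fin.succAbove_succ_self] at e₂
    split_ifs at e₁ e₂ <;> omega
  · rw [← Fin.succAbove_castSucc_eq_succAbove_succ ht] at e₂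
    have hne : ∀ j, j ≠ k.castSucc.succAbove t → (p j : ℕ) ≠ p (k.castSucc.succAbove t) :=
      fun j hj hv => hj (p.injective (Fin.ext hv))
    have h₁ := hne k.castSucc (Fin.succAbove_ne _ _).symm
    have h₂ := hne k.succ (by
      rw [Fin.succAbove_castSucc_eq_succAbove_succ ht]; exact (Fin.succAbove_ne _ _).symm)
    split_ifs at e₁ e₂ <;> omega

lemma dist_eq_one_of_del_eq {i : Fin (n + 1)} {k : Fin n} (hi : i ≤ k.castSucc)
    (h : del p i = del p k.succ) : Nat.dist (p k.castSucc) (p k.succ) = 1 := by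
  have e₁ := val_del_apply_add p i k
  have e₂ := val_del_apply_add p k.succ k
  rw [Fin.succAbove_of_le_castSucc _ _ hi] at e₁
  rw [Fin.succAbove_succ_self, ← h] at e₂
  have hne : (p k.castSucc : ℕ) ≠ p k.succ :=
    fun hv => Fin.castSucc_lt_succ.ne (p.injective (Fin.ext hv))
  simp only [Nat.dist, Fin.lt_def] at e₁ e₂ ⊢
  split_ifs at e₁ e₂ <;> omega

end Deletion

theorem card_image_add_card_filter_eq {α : Type*} [DecidableEq α] :
    ∀ {n : ℕ} (f : Fin (n + 1) → α),
      (∀ (i : Fin (n + 1)) (k : Fin n), i ≤ k.castSucc → f i = f k.succ →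
        f k.castSucc = f k.succ) →
      #(univ.image f) + #{k : Fin n | f k.castSucc = f k.succ} = n + 1
  | 0, f, _ => by simp [Finset.univ_unique]
  | m + 1, f, H => by
    have ih := card_image_add_card_filter_eq (f ∘ Fin.castSucc) fun i k hik hf =>
      H i.castSucc k.castSucc (Fin.castSucc_le_castSucc_iff.2 hik) hf
    have himage : univ.image f = insert (f (Fin.last _)) (univ.image (f ∘ Fin.castSucc)) := by
      rw [Fin.univ_castSuccEmb, Finset.cons_eq_insert, Finset.image_insert, Finset.map_eq_image,
        Finset.image_image]
      rfl
    have hlast : f (Fin.last _) ∈ univ.image (f ∘ Fin.castSucc) ↔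
        f (Fin.last m).castSucc = f (Fin.last m).succ := by
      constructor
      · intro hmem
        obtain ⟨i, -, hi⟩ := Finset.mem_image.1 hmem
        exact H i.castSucc (Fin.last m) (Fin.castSucc_le_castSucc_iff.2 (Fin.le_last i))
          (by rw [Fin.succ_last]; exact hi)
      · intro hf
        rw [Fin.succ_last] at hf
        exact Finset.mem_image.2 ⟨Fin.last m, Finset.mem_univ _, hf⟩
    rw [himage, Finset.card_insert_eq_ite, Finset.card_filter, Fin.sum_univ_castSucc,
      ← Finset.card_filter]
    simp only [Function.comp_apply, Fin.succ_castSucc] at ih ⊢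
    by_cases hmem : f (Fin.last (m + 1)) ∈ univ.image (f ∘ Fin.castSucc)
    · rw [if_pos hmem, if_pos (hlast.1 hmem)]; omega
    · rw [if_neg hmem, if_neg (mt hlast.2 hmem)]; omega

open Equiv in
theorem card_filter_perm_mul {α : Type*} [Fintype α] [DecidableEq α] (r : α → α → Prop)
    [DecidableRel r] (hr : ∀ x, ¬ r x x) {a b : α} (hab : a ≠ b) :
    #{p : Perm α | r (p a) (p b)} * (Fintype.card α * (Fintype.card α - 1))
      = (Fintype.card α)! * #{xy : α × α | r xy.1 xy.2} := by
  -- By 2-transitivity every off-diagonal pair of positions gives the same count.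
  have hinv : ∀ cd ∈ (univ : Finset α).offDiag,
      #{p : Perm α | r (p cd.1) (p cd.2)} = #{p : Perm α | r (p a) (p b)} := by
    rintro ⟨c, d⟩ hcd
    obtain ⟨g, hgc, hgd⟩ := MulAction.is_two_pretransitive_iff.1
      (Perm.isMultiplyPretransitive α 2) (Finset.mem_offDiag.1 hcd).2.2 hab
    refine (Finset.card_equiv (Equiv.mulRight g) fun p => ?_).symm
    rw [Perm.smul_def] at hgc hgd
    simp [hgc, hgd]
  have hrel : ∀ p : Perm α, #{cd ∈ (univ : Finset α).offDiag | r (p cd.1) (p cd.2)}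
      = #{xy : α × α | r xy.1 xy.2} := by
    intro p
    refine Finset.card_equiv (p.prodCongr p) fun ⟨c, d⟩ => ?_
    simp only [Finset.mem_filter, Finset.mem_offDiag, Finset.mem_univ, true_and,
      Equiv.prodCongr_apply, Prod.map_apply, and_iff_right_iff_imp]
    rintro hcd rfl
    exact hr _ hcd
  calc #{p : Perm α | r (p a) (p b)} * (Fintype.card α * (Fintype.card α - 1))
      = ∑ cd ∈ (univ : Finset α).offDiag, #{p : Perm α | r (p cd.1) (p cd.2)} := by
        rw [Finset.sum_congr rfl hinv, Finset.sum_const, Finset.offDiag_card, smul_eq_mul,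
          Finset.card_univ, Nat.mul_sub_one, mul_comm]
    _ = ∑ p : Perm α, #{cd ∈ (univ : Finset α).offDiag | r (p cd.1) (p cd.2)} := by
        simp only [Finset.card_filter]
        exact Finset.sum_comm
    _ = (Fintype.card α)! * #{xy : α × α | r xy.1 xy.2} := by
        rw [Finset.sum_congr rfl fun p _ => hrel p, Finset.sum_const, Finset.card_univ,
          Fintype.card_perm, smul_eq_mul]

lemma card_filter_val_add_one_eq (n : ℕ) :
    #{xy : Fin (n + 1) × Fin (n + 1) | xy.1.val + 1 = xy.2.val} = n := by
  refine ((Finset.card_fin n).symm.trans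
    (Finset.card_bij (fun k _ => (k.castSucc, k.succ)) ?_ ?_ ?_)).symm
  · intro k _
    simp
  · intro k _ l _ h
    exact Fin.castSucc_injective _ (Prod.ext_iff.1 h).1
  · rintro ⟨x, y⟩ hxy
    simp only [Finset.mem_filter, Finset.mem_univ, true_and] at hxy
    exact ⟨⟨x, by omega⟩, Finset.mem_univ _, Prod.ext (Fin.ext rfl) (Fin.ext hxy)⟩

lemma card_filter_dist_eq_one (n : ℕ) :
    #{xy : Fin (n + 1) × Fin (n + 1) | Nat.dist xy.1 xy.2 = 1} = 2 * n := by
  have hsplit : (univ.filter fun xy : Fin (n + 1) × Fin (n + 1) => Nat.dist xy.1 xy.2 = 1)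
      = (univ.filter fun xy : Fin (n + 1) × Fin (n + 1) => xy.1.val + 1 = xy.2.val) ∪
        (univ.filter fun xy : Fin (n + 1) × Fin (n + 1) => xy.2.val + 1 = xy.1.val) := by
    ext xy
    simp only [Finset.mem_union, Finset.mem_filter, Finset.mem_univ, true_and]
    unfold Nat.dist
    omega
  have hswap : #{xy : Fin (n + 1) × Fin (n + 1) | xy.2.val + 1 = xy.1.val} = n :=
    (Finset.card_equiv (Equiv.prodComm _ _) fun _ => by simp).trans
      (card_filter_val_add_one_eq n)
  rw [hsplit, Finset.card_union_of_disjoint, card_filter_val_add_one_eq, hswap, two_mul]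
  exact Finset.disjoint_filter.2 fun xy _ h₁ h₂ => by omega

lemma sum_C (n : ℕ) : ∑ p : Equiv.Perm (Fin (n + 1)), C p = 2 * n * n ! := by
  have hbond : ∀ k : Fin n,
      #{p : Equiv.Perm (Fin (n + 1)) | Nat.dist (p k.castSucc) (p k.succ) = 1} = 2 * n ! := by
    intro k
    have hpos : 0 < (n + 1) * n := Nat.mul_pos n.succ_pos k.pos
    have h := card_filter_perm_mul (fun x y : Fin (n + 1) => Nat.dist x y = 1)
      (fun x => by simp) (Fin.castSucc_lt_succ (i := k)).ne
    rw [Fintype.card_fin, Nat.add_sub_cancel, card_filter_dist_eq_one, Nat.factorial_succ] at h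
    exact Nat.eq_of_mul_eq_mul_right hpos (by rw [h]; ring)
  calc ∑ p : Equiv.Perm (Fin (n + 1)), C p
      = ∑ k : Fin n, #{p : Equiv.Perm (Fin (n + 1)) |
          Nat.dist (p k.castSucc) (p k.succ) = 1} := by
        simp only [C, Finset.card_filter]
        exact Finset.sum_comm
    _ = 2 * n * n ! := by
        rw [Finset.sum_congr rfl fun k _ => hbond k, Finset.sum_const, Finset.card_univ,
          Fintype.card_fin, smul_eq_mul]
        ring

lemma card_D1_add_C {n : ℕ} (p : Equiv.Perm (Fin (n + 1))) : #(D1 p) + C p = n + 1 := by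
  have hbond : ∀ k : Fin n,
      del p k.castSucc = del p k.succ ↔ Nat.dist (p k.castSucc) (p k.succ) = 1 :=
    fun k => ⟨dist_eq_one_of_del_eq p le_rfl, del_castSucc_eq_del_succ p⟩
  rw [D1, C, ← Finset.filter_congr fun k _ => hbond k]
  exact card_image_add_card_filter_eq (del p) fun i k hik h =>
    del_castSucc_eq_del_succ p (dist_eq_one_of_del_eq p hik h)

theorem stmt6_general {n : ℕ} :
    (∑ p : Equiv.Perm (Fin (n + 1)), ((D1 p).card : ℚ)) / (Nat.factorial (n + 1))
      = (n + 1) - 2 * n / (n + 1) := by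
  have hD1 : ∀ p : Equiv.Perm (Fin (n + 1)), ((D1 p).card : ℚ) = n + 1 - C p := fun p => by
    rw [eq_sub_iff_add_eq]
    exact_mod_cast card_D1_add_C p
  rw [Finset.sum_congr rfl fun p _ => hD1 p, Finset.sum_sub_distrib, ← Nat.cast_sum, sum_C,
    Finset.sum_const, Finset.card_univ, Fintype.card_perm, Fintype.card_fin, nsmul_eq_mul,
    Nat.factorial_succ]
  push_cast
  field_simp

theorem stmt6 {n : ℕ} (hn : 1 ≤ n) :
    (∑ p : Equiv.Perm (Fin (n + 1)), ((D1 p).card : ℚ)) / (Nat.factorial (n + 1))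
      = (n + 1) - 2 * n / (n + 1) :=
  stmt6_general
end

section
/- For n ≥ 2, the number of ordered pairs (p, q) with p ∈ S_n, q ∈ S_{n−1}, and q a pattern of p, equals (n−1)!·(n² − 2n + 2), which equals n!·(n − 2(n−1)/n). -/
open Finset

/-!
If `del p i = q` then `p = ins q i (p i)`, so the permutations containing `q ∈ S_n` as a pattern
are the `(n + 1)²` insertions `ins q j k`. If two insertions at positions `j < j'` agree, the
entry inserted at `j'` lands directly to the right of an old entry `q t` with a value adjacent
to it: `(j', k') = (t + 1, q t)` or `(t + 1, q t + 1)`. Conversely each of these `2n` redundant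
insertions also arises by inserting at position `t` (the two adjacent entries just trade roles).
Hence the `n² + 1` remaining insertions give every extension exactly once, whatever `q` is.
-/

section Insertion

variable {n : ℕ}

lemma Fin.eq_succAbove_of_strictMono {g : Fin n → Fin (n + 1)} {k : Fin (n + 1)}
    (hg : StrictMono g) (hk : ∀ a, g a ≠ k) : g = k.succAbove := by
  choose h hh using fun a => Fin.exists_succAbove_eq (hk a)
  have h_strictMono : StrictMono h := fun a b hab => by
    rw [← Fin.succAbove_lt_succAbove_iff (p := k), hh, hh]
    exact hg hab
  funext a
  rw [← hh, h_strictMono.apply_eq]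

lemma Fin.succAbove_eq_castSucc_or_succ (k : Fin (n + 1)) (v : Fin n) :
    k.succAbove v = v.castSucc ∨ k.succAbove v = v.succ := by
  rcases lt_or_ge v.castSucc k with h | h
  · exact .inl (Fin.succAbove_of_castSucc_lt k v h)
  · exact .inr (Fin.succAbove_of_le_castSucc k v h)

lemma Fin.succAbove_castSucc_eq_succAbove_succ_s18 {t b : Fin n} (h : b ≠ t) :
    t.castSucc.succAbove b = t.succ.succAbove b := by
  rcases h.lt_or_gt with hlt | hgt
  · rw [Fin.succAbove_castSucc_of_lt _ _ hlt, Fin.succAbove_succ_of_le _ _ hlt.le]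
  · rw [Fin.succAbove_castSucc_of_le _ _ hgt.le, Fin.succAbove_succ_of_lt _ _ hgt]

lemma Fin.monotone_update_succAbove (v : Fin n) {c : Fin (n + 1)}
    (hc : c = v.castSucc ∨ c = v.succ) : Monotone (Function.update c.succAbove v c) := by
  intro a b hab
  simp only [Function.update_apply, Fin.succAbove, Fin.le_def, Fin.lt_def] at hab ⊢
  rcases hc with rfl | rfl <;> split_ifs <;> simp_all [Fin.ext_iff] <;> omega

lemma ins_apply_self (q : Equiv.Perm (Fin n)) (j k : Fin (n + 1)) : ins q j k j = k := by
  simp [ins, finSuccEquiv'_at]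

lemma ins_apply_succAbove (q : Equiv.Perm (Fin n)) (j k : Fin (n + 1)) (a : Fin n) :
    ins q j k (j.succAbove a) = k.succAbove (q a) := by
  simp [ins, finSuccEquiv'_succAbove]

lemma del_eq_iff_monotone {p : Equiv.Perm (Fin (n + 1))} {i : Fin (n + 1)}
    {q : Equiv.Perm (Fin n)} : del p i = q ↔ Monotone fun a => p (i.succAbove (q⁻¹ a)) := by
  set f : Fin n → Fin (n + 1) := fun a => p (i.succAbove a)
  have hf : Function.Injective f := p.injective.comp Fin.succAbove_right_injective
  rw [del, inv_eq_iff_eq_inv]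
  refine ⟨fun h => h ▸ Tuple.monotone_sort f, fun hm => Equiv.ext fun a => ?_⟩
  exact hf (congrFun (Tuple.unique_monotone (f := f) (Tuple.monotone_sort f) hm) a)

lemma ins_eq_iff {q : Equiv.Perm (Fin n)} {j k : Fin (n + 1)} {p : Equiv.Perm (Fin (n + 1))} :
    ins q j k = p ↔ p j = k ∧ del p j = q := by
  constructor
  · rintro rfl
    refine ⟨ins_apply_self q j k, del_eq_iff_monotone.2 ?_⟩
    simpa only [ins_apply_succAbove, Equiv.Perm.coe_inv, Equiv.apply_symm_apply]
      using (Fin.strictMono_succAbove k).monotone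
  · rintro ⟨rfl, hq⟩
    have h_succAbove : (fun a => p (j.succAbove (q⁻¹ a))) = (p j).succAbove := by
      refine Fin.eq_succAbove_of_strictMono ?_ fun a h => Fin.succAbove_ne j _ (p.injective h)
      exact (del_eq_iff_monotone.1 hq).strictMono_of_injective
        (p.injective.comp (Fin.succAbove_right_injective.comp q⁻¹.injective))
    ext x : 1
    refine Fin.succAboveCases j ?_ (fun a => ?_) x
    · rw [ins_apply_self]
    · simpa [ins_apply_succAbove] using (congrFun h_succAbove (q a)).symm

lemma exists_ins_castSucc_eq_ins_succ (q : Equiv.Perm (Fin n)) (t : Fin n) {c : Fin (n + 1)}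
    (hc : c = (q t).castSucc ∨ c = (q t).succ) : ∃ k, ins q t.castSucc k = ins q t.succ c := by
  refine ⟨_, ins_eq_iff.2 ⟨rfl, del_eq_iff_monotone.2 ?_⟩⟩
  convert Fin.monotone_update_succAbove (q t) hc using 1
  funext a
  obtain ⟨b, rfl⟩ := q.surjective a
  rcases eq_or_ne b t with rfl | hb
  · simp [ins_apply_self]
  · rw [Equiv.Perm.coe_inv, Equiv.symm_apply_apply, Fin.succAbove_castSucc_eq_succAbove_succ_s18 hb,
      ins_apply_succAbove, Function.update_of_ne (q.injective.ne hb)]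

def redundantIns (q : Equiv.Perm (Fin n)) : Finset (Fin (n + 1) × Fin (n + 1)) :=
  univ.biUnion fun t => {(t.succ, (q t).castSucc), (t.succ, (q t).succ)}

lemma mem_redundantIns {q : Equiv.Perm (Fin n)} {j k : Fin (n + 1)} :
    (j, k) ∈ redundantIns q ↔ ∃ t, j = t.succ ∧ (k = (q t).castSucc ∨ k = (q t).succ) := by
  simp [redundantIns, and_or_left]

lemma card_redundantIns (q : Equiv.Perm (Fin n)) : #(redundantIns q) = 2 * n := by
  rw [redundantIns, card_biUnion]
  · rw [sum_const_nat fun t _ => card_pair (by simp [Fin.ext_iff]), card_univ, Fintype.card_fin,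
      mul_comm]
  · intro t _ t' _ htt'
    simp [htt'.symm]

lemma mem_redundantIns_of_ins_eq_ins {q : Equiv.Perm (Fin n)} {j k j' k' : Fin (n + 1)}
    (h : ins q j k = ins q j' k') (hj : j < j') : (j', k') ∈ redundantIns q := by
  obtain ⟨t, rfl⟩ := Fin.exists_succ_eq.2 ((Fin.zero_le j).trans_lt hj).ne'
  have hk' : k' = k.succAbove (q t) := by
    rw [← ins_apply_self q t.succ k', ← h, ← Fin.succAbove_of_lt_succ j t hj, ins_apply_succAbove]
  exact mem_redundantIns.2 ⟨t, rfl, hk' ▸ Fin.succAbove_eq_castSucc_or_succ k (q t)⟩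

lemma injOn_ins_compl_redundantIns (q : Equiv.Perm (Fin n)) :
    Set.InjOn (fun jk : Fin (n + 1) × Fin (n + 1) => ins q jk.1 jk.2)
      ((redundantIns q)ᶜ : Finset _) := by
  rintro ⟨j, k⟩ hjk ⟨j', k'⟩ hjk' h
  simp only [coe_compl, Set.mem_compl_iff, mem_coe] at hjk hjk' h
  rcases lt_trichotomy j j' with hlt | rfl | hgt
  · exact absurd (mem_redundantIns_of_ins_eq_ins h hlt) hjk'
  · rw [← ins_apply_self q j k, h, ins_apply_self]
  · exact absurd (mem_redundantIns_of_ins_eq_ins h.symm hgt) hjk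

lemma filter_exists_del_eq (q : Equiv.Perm (Fin n)) :
    univ.filter (fun p : Equiv.Perm (Fin (n + 1)) => ∃ i, del p i = q)
      = (redundantIns q)ᶜ.image fun jk => ins q jk.1 jk.2 := by
  ext p
  simp only [mem_filter, mem_univ, true_and, mem_image, mem_compl]
  constructor
  · intro hp
    obtain ⟨i, hi, hmin⟩ := wellFounded_lt.has_min {i | del p i = q} hp
    have hp_eq : ins q i (p i) = p := ins_eq_iff.2 ⟨rfl, hi⟩
    refine ⟨(i, p i), fun hred => ?_, hp_eq⟩
    obtain ⟨t, rfl, hc⟩ := mem_redundantIns.1 hred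
    obtain ⟨k, hk⟩ := exists_ins_castSucc_eq_ins_succ q t hc
    exact hmin t.castSucc (ins_eq_iff.1 (hk.trans hp_eq)).2 Fin.castSucc_lt_succ
  · rintro ⟨jk, -, rfl⟩
    exact ⟨jk.1, (ins_eq_iff.1 rfl).2⟩

lemma card_filter_exists_del_eq (q : Equiv.Perm (Fin n)) :
    #(univ.filter fun p : Equiv.Perm (Fin (n + 1)) => ∃ i, del p i = q) = n ^ 2 + 1 := by
  rw [filter_exists_del_eq, card_image_of_injOn (injOn_ins_compl_redundantIns q), card_compl,
    card_redundantIns, Fintype.card_prod, Fintype.card_fin]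
  exact Nat.sub_eq_of_eq_add (by ring)

end Insertion

theorem stmt18_general {n : ℕ} :
    ((Finset.univ : Finset (Equiv.Perm (Fin (n + 1)) × Equiv.Perm (Fin n))).filter
        fun pq => ∃ i, del pq.1 i = pq.2).card = Nat.factorial n * (n ^ 2 + 1) ∧
    ((Nat.factorial n * (n ^ 2 + 1) : ℚ)
        = Nat.factorial (n + 1) * ((n + 1) - 2 * n / (n + 1))) := by
  constructor
  · rw [card_filter, Fintype.sum_prod_type_right]
    simp only [← card_filter, card_filter_exists_del_eq, sum_const, card_univ, Fintype.card_perm,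
      Fintype.card_fin, smul_eq_mul]
  · rw [Nat.factorial_succ]
    push_cast
    field_simp
    ring

theorem stmt18 {n : ℕ} (hn : 1 ≤ n) :
    ((Finset.univ : Finset (Equiv.Perm (Fin (n + 1)) × Equiv.Perm (Fin n))).filter
        fun pq => ∃ i, del pq.1 i = pq.2).card = Nat.factorial n * (n ^ 2 + 1) ∧
    ((Nat.factorial n * (n ^ 2 + 1) : ℚ)
        = Nat.factorial (n + 1) * ((n + 1) - 2 * n / (n + 1))) :=
  stmt18_general
end
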